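/- arXiv:2002.06120 — 3 statements merged into one kernel-verified Lean document; each statement's English description precedes it below -/
import Mathlib

section
/- Let δ > 0 and P, γm, γn, γd > 0 with γm > γn. The equation B(P_d) = A, where A = δ(Pγm+1)/(Pγm(δ+1)) and B(P_d) = (Pγn+1)(δ − P_d γd)/(Pγn(δ+1−P_d γd)), has the unique solution P_int = (P/γd) · δ(δ+1)(γm − γn) / (Pγm(δ + Pγn + 1) − δPγn), provided the denominator is nonzero. -/
/-- The equation `B(Pd) = A` has the unique solution
`P_int = (P/γd)·δ·(δ+1)·(γm − γn) / (P·γm·(δ + P·γn + 1) − δ·P·γn)`,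
provided the denominator is nonzero. -/
theorem B_eq_A_unique_solution (P γm γn γd δ : ℝ)
    (hP : 0 < P) (hγn : 0 < γn) (hmn : γn < γm) (hγd : 0 < γd) (hδ : 0 < δ)
    (hden : P * γm * (δ + P * γn + 1) - δ * P * γn ≠ 0) :
    ∀ Pd : ℝ,
      (P * γn + 1) * (δ - Pd * γd) / (P * γn * (δ + 1 - Pd * γd))
          = δ * (P * γm + 1) / (P * γm * (δ + 1)) ↔
        Pd = (P / γd) * (δ * (δ + 1) * (γm - γn)) /
              (P * γm * (δ + P * γn + 1) - δ * P * γn) := by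
  intro Pd
  have hγm : 0 < γm := hγn.trans hmn
  have hδ1 : (0:ℝ) < δ + 1 := by linarith
  have hRHSpos : 0 < δ * (P * γm + 1) / (P * γm * (δ + 1)) := by positivity
  constructor
  · intro h
    have hne : δ + 1 - Pd * γd ≠ 0 := by
      intro h0
      rw [h0, mul_zero, div_zero] at h
      exact absurd h.symm (ne_of_gt hRHSpos)
    have hd1 : P * γn * (δ + 1 - Pd * γd) ≠ 0 :=
      mul_ne_zero (by positivity) hne
    rw [div_eq_div_iff hd1 (by positivity)] at h
    rw [eq_div_iff hden, div_mul_eq_mul_div, mul_comm, eq_div_iff hγd.ne']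
    linear_combination -h
  · intro h
    have h2 : Pd * γd * (P * γm * (δ + P * γn + 1) - δ * P * γn)
        = P * (δ * (δ + 1) * (γm - γn)) := by
      rw [eq_div_iff hden, div_mul_eq_mul_div, mul_comm, eq_div_iff hγd.ne'] at h
      linear_combination h
    have hne : δ + 1 - Pd * γd ≠ 0 := by
      intro h0
      have hz : (δ + 1) * (P * γm * (P * γn + 1)) = 0 := by
        linear_combination (P * γm * (δ + P * γn + 1) - δ * P * γn) * h0 + h2
      have : (0:ℝ) < (δ + 1) * (P * γm * (P * γn + 1)) := by positivity
      linarith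
    have hd1 : P * γn * (δ + 1 - Pd * γd) ≠ 0 :=
      mul_ne_zero (by positivity) hne
    rw [div_eq_div_iff hd1 (by positivity)]
    linear_combination -h2
end

section
/- For reals s > w > 0 and d ≥ 0, the map α ↦ log2(1 + (1-α)s) + log2(1 + d + αw/((1-α)w + 1)) is strictly decreasing in α on [0,1). -/
/-- For `s > w > 0` and `d ≥ 0`, the map
`α ↦ log2(1 + (1-α)·s) + log2(1 + d + α·w/((1-α)·w + 1))` is strictly decreasing
in `α` on `[0,1)`. -/
theorem sum_rate_strictAntiOn (s w d : ℝ) (hw : 0 < w) (hsw : w < s) (hd : 0 ≤ d) :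
    StrictAntiOn
      (fun α : ℝ =>
        Real.logb 2 (1 + (1 - α) * s) +
          Real.logb 2 (1 + d + α * w / ((1 - α) * w + 1)))
      (Set.Ico 0 1) := by
  have hs : 0 < s := hw.trans hsw
  intro a ha b hb hab
  obtain ⟨ha0, ha1⟩ := ha
  obtain ⟨hb0, hb1⟩ := hb
  have hDa : 0 < (1 - a) * w + 1 := by nlinarith
  have hDb : 0 < (1 - b) * w + 1 := by nlinarith
  have hxa : 0 < 1 + (1 - a) * s := by nlinarith
  have hxb : 0 < 1 + (1 - b) * s := by nlinarith
  have hya : 0 < 1 + d + a * w / ((1 - a) * w + 1) := by positivity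
  have hyb : 0 < 1 + d + b * w / ((1 - b) * w + 1) := by positivity
  have key : (1 + (1 - b) * s) * (1 + d + b * w / ((1 - b) * w + 1)) <
      (1 + (1 - a) * s) * (1 + d + a * w / ((1 - a) * w + 1)) := by
    have e1 : 1 + d + b * w / ((1 - b) * w + 1)
        = ((1 + d) * ((1 - b) * w + 1) + b * w) / ((1 - b) * w + 1) := by
      field_simp
    have e2 : 1 + d + a * w / ((1 - a) * w + 1)
        = ((1 + d) * ((1 - a) * w + 1) + a * w) / ((1 - a) * w + 1) := by
      field_simp
    rw [e1, e2]
    rw [mul_div_assoc', mul_div_assoc', div_lt_div_iff₀ hDb hDa]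
    nlinarith [mul_nonneg (mul_nonneg (mul_nonneg hd hs.le) (sub_pos.mpr hab).le)
      (mul_pos hDa hDb).le,
      mul_pos (mul_pos (by linarith : (0:ℝ) < w + 1) (sub_pos.mpr hab)) (sub_pos.mpr hsw)]
  simp only
  rw [← Real.logb_mul (ne_of_gt hxa) (ne_of_gt hya),
    ← Real.logb_mul (ne_of_gt hxb) (ne_of_gt hyb)]
  exact Real.logb_lt_logb one_lt_two (mul_pos hxb hyb) key
end

section
/- In the FD C-NOMA scheme, at the optimum the power allocation coefficient satisfies α* = f(P_d*) where f(x) = δ(γSI·x + γm·P + 1)/(γm·P·(δ+1)); i.e., the strong user's SIC-rate constraint R_{m,n}^F ≥ R_th is tight at any sum-rate maximizer with α* given by A_F evaluated at the optimal relaying power, provided A_F(P_d*) ≥ B_F(P_d*). -/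
/-!
For `α < 1` the strong user's own rate and its SIC rate add up to the full-power rate
`log₂ (1 + P γm / (Pd γSI + 1))`, so the sum rate is at most this bound, with equality exactly when
the SIC rate does not exceed the weak user's rate. At `α = A_F(Pd)` the SIC rate is `R_th`, and
`B_F(Pd) ≤ A_F(Pd)` says that the weak user's rate is at least `R_th`; hence `(A_F(Pd), Pd)` attains
the bound, and so must every maximizer `(α, Pd)`. If `α > A_F(Pd)`, clearing denominators shows that
the weak user's rate at `(A_F(Pd), Pd)` exceeds `R_th` strictly and that `Pd > 0`. By continuity the
same holds at `(A_F(Pd'), Pd')` for some `Pd'` slightly below `Pd`; that point is feasible and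
attains the bound at `Pd'`, which is strictly larger than the bound at `Pd`.
-/

open Real Filter Set Topology

theorem exists_mem_Ioo_pos_of_continuousAt {f : ℝ → ℝ} {a b : ℝ} (hab : a < b)
    (hf : ContinuousAt f b) (hb : 0 < f b) : ∃ x ∈ Ioo a b, 0 < f x :=
  have hIoo : ∀ᶠ x in 𝓝[<] b, x ∈ Ioo a b := Ioo_mem_nhdsLT hab
  (hIoo.and (nhdsWithin_le_nhds (hf.eventually_const_lt hb))).exists

noncomputable section

namespace FDCNOMA

variable (P γm γn γd γSI δ : ℝ)

def strongRate (α t : ℝ) : ℝ := logb 2 (1 + (1 - α) * P * γm / (t * γSI + 1))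

def sicRate (α t : ℝ) : ℝ := logb 2 (1 + α * P * γm / ((1 - α) * P * γm + t * γSI + 1))

def weakRate (α t : ℝ) : ℝ := logb 2 (1 + t * γd + α * P * γn / ((1 - α) * P * γn + 1))

def sumRate (α t : ℝ) : ℝ :=
  strongRate P γm γSI α t + min (sicRate P γm γSI α t) (weakRate P γn γd α t)

def fullPowerRate (t : ℝ) : ℝ := logb 2 (1 + P * γm / (t * γSI + 1))

/-- The paper's `A_F`; `alphaWeak` and `alphaMax` below are its `B_F` and `C_F`. -/
def alphaSIC (t : ℝ) : ℝ := δ * (γSI * t + γm * P + 1) / (γm * P * (δ + 1))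

def alphaWeak (t : ℝ) : ℝ := (P * γn + 1) * (δ - t * γd) / (P * γn * (δ + 1 - t * γd))

def alphaMax (t : ℝ) : ℝ := 1 - δ * (γSI * t + 1) / (P * γm)

def rateGap (α t : ℝ) : ℝ :=
  t * γd * ((1 - α) * P * γm + t * γSI + 1) * ((1 - α) * P * γn + 1) -
    α * (P * γm - (t * γSI + 1) * (P * γn))

/-- The weak user's SINR minus `δ`, times its denominator: the weak user reaches the rate
`log₂ (1 + δ)` iff this is nonnegative. -/
def weakMargin (α t : ℝ) : ℝ := (t * γd - δ) * ((1 - α) * P * γn + 1) + α * P * γn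

variable {P γm γn γd γSI δ : ℝ} {α t : ℝ}

theorem strongRate_add_sicRate (hP : 0 < P) (hγm : 0 < γm) (hγSI : 0 ≤ γSI) (ht : 0 ≤ t)
    (hα : α < 1) :
    strongRate P γm γSI α t + sicRate P γm γSI α t = fullPowerRate P γm γSI t := by
  have hc : 0 < t * γSI + 1 := by positivity
  have hM : 0 < (1 - α) * P * γm := by have := sub_pos.2 hα; positivity
  have hD : 0 < (1 - α) * P * γm + t * γSI + 1 := by linarith
  have hprod : (1 + (1 - α) * P * γm / (t * γSI + 1)) *
      (1 + α * P * γm / ((1 - α) * P * γm + t * γSI + 1)) = 1 + P * γm / (t * γSI + 1) := by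
    field_simp
    ring
  have hfull : 1 + P * γm / (t * γSI + 1) ≠ 0 := by positivity
  unfold strongRate sicRate fullPowerRate
  rw [← logb_mul (left_ne_zero_of_mul (hprod ▸ hfull)) (right_ne_zero_of_mul (hprod ▸ hfull)),
    hprod]

theorem sumRate_le_fullPowerRate (hP : 0 < P) (hγm : 0 < γm) (hγSI : 0 ≤ γSI) (ht : 0 ≤ t)
    (hα : α < 1) : sumRate P γm γn γd γSI α t ≤ fullPowerRate P γm γSI t := by
  rw [← strongRate_add_sicRate hP hγm hγSI ht hα, sumRate]
  gcongr
  exact min_le_left _ _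

theorem fullPowerRate_le_sumRate_iff (hP : 0 < P) (hγm : 0 < γm) (hγSI : 0 ≤ γSI) (ht : 0 ≤ t)
    (hα : α < 1) :
    fullPowerRate P γm γSI t ≤ sumRate P γm γn γd γSI α t ↔
      sicRate P γm γSI α t ≤ weakRate P γn γd α t := by
  rw [← strongRate_add_sicRate hP hγm hγSI ht hα, sumRate, add_le_add_iff_left, le_min_iff,
    and_iff_right le_rfl]

theorem sicRate_le_weakRate_iff (hP : 0 < P) (hγm : 0 < γm) (hγn : 0 < γn) (hγd : 0 ≤ γd)
    (hγSI : 0 ≤ γSI) (ht : 0 ≤ t) (hα0 : 0 ≤ α) (hα1 : α < 1) :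
    sicRate P γm γSI α t ≤ weakRate P γn γd α t ↔ 0 ≤ rateGap P γm γn γd γSI α t := by
  have h1α := sub_pos.2 hα1
  have hD1 : 0 < (1 - α) * P * γm + t * γSI + 1 := by positivity
  have hD2 : 0 < (1 - α) * P * γn + 1 := by positivity
  have hsub : 1 + t * γd + α * P * γn / ((1 - α) * P * γn + 1) -
      (1 + α * P * γm / ((1 - α) * P * γm + t * γSI + 1)) =
      rateGap P γm γn γd γSI α t / (((1 - α) * P * γm + t * γSI + 1) * ((1 - α) * P * γn + 1)) := by
    unfold rateGap
    field_simp
    ring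
  rw [sicRate, weakRate, logb_le_logb one_lt_two (by positivity) (by positivity), ← sub_nonneg,
    hsub, le_div_iff₀ (by positivity), zero_mul]

theorem pos_of_rateGap_nonneg (hP : 0 < P) (hmn : γn < γm) (hα : 0 < α) (ht : 0 ≤ t)
    (h : 0 ≤ rateGap P γm γn γd γSI α t) : 0 < t := by
  refine ht.lt_of_ne fun ht0 => ?_
  subst ht0
  have : 0 < α * (P * γm - P * γn) := mul_pos hα (sub_pos.2 (mul_lt_mul_of_pos_left hmn hP))
  simp only [rateGap, zero_mul, zero_add, one_mul] at h
  linarith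

theorem rateGap_pos_of_lt {a : ℝ} (hP : 0 < P) (hγm : 0 < γm) (hγn : 0 < γn) (hγd : 0 < γd)
    (hγSI : 0 ≤ γSI) (ht : 0 < t) (ha : 0 ≤ a) (haα : a < α) (hα : α < 1)
    (h : 0 ≤ rateGap P γm γn γd γSI α t) : 0 < rateGap P γm γn γd γSI a t := by
  set K := P * γm - (t * γSI + 1) * (P * γn)
  have hD1 : (1 - α) * P * γm + t * γSI + 1 ≤ (1 - a) * P * γm + t * γSI + 1 := by
    have := mul_le_mul_of_nonneg_right (mul_le_mul_of_nonneg_right haα.le hP.le) hγm.le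
    linarith
  have hD2 : (1 - α) * P * γn + 1 ≤ (1 - a) * P * γn + 1 := by
    have := mul_le_mul_of_nonneg_right (mul_le_mul_of_nonneg_right haα.le hP.le) hγn.le
    linarith
  have hD1α : 0 < (1 - α) * P * γm + t * γSI + 1 := by
    have := sub_pos.2 hα; positivity
  have hD2α : 0 < (1 - α) * P * γn + 1 := by
    have := sub_pos.2 hα; positivity
  have hD : ((1 - α) * P * γm + t * γSI + 1) * ((1 - α) * P * γn + 1) ≤
      ((1 - a) * P * γm + t * γSI + 1) * ((1 - a) * P * γn + 1) :=
    mul_le_mul hD1 hD2 hD2α.le (hD1α.le.trans hD1)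
  have hs : 0 < t * γd := mul_pos ht hγd
  -- `rateGap x t = t γd D₁(x) D₂(x) - x K` with `D₁ D₂` decreasing in `x`: if `K ≤ 0` the gap at
  -- `a` is positive outright, otherwise the gap itself decreases on `[a, α]`.
  unfold rateGap at h ⊢
  rcases le_or_gt K 0 with hK | hK
  · have := mul_nonpos_of_nonneg_of_nonpos ha hK
    nlinarith [mul_pos hs (mul_pos hD1α hD2α)]
  · nlinarith [mul_lt_mul_of_pos_right haα hK, mul_le_mul_of_nonneg_left hD hs.le]

theorem rateGap_alphaSIC (hP : 0 < P) (hγm : 0 < γm) (hδ : 0 < δ) :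
    rateGap P γm γn γd γSI (alphaSIC P γm γSI δ t) t =
      ((1 - alphaSIC P γm γSI δ t) * P * γm + t * γSI + 1) *
        weakMargin P γn γd δ (alphaSIC P γm γSI δ t) t := by
  unfold rateGap weakMargin alphaSIC
  field_simp
  ring

theorem sicDenom_alphaSIC_pos (hP : 0 < P) (hγm : 0 < γm) (hγSI : 0 ≤ γSI) (hδ : 0 < δ)
    (ht : 0 ≤ t) : 0 < (1 - alphaSIC P γm γSI δ t) * P * γm + t * γSI + 1 := by
  have hprod : ((1 - alphaSIC P γm γSI δ t) * P * γm + t * γSI + 1) * (δ + 1) =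
      P * γm + t * γSI + 1 := by
    unfold alphaSIC
    field_simp
    ring
  have hpos : 0 < P * γm + t * γSI + 1 := by positivity
  exact pos_of_mul_pos_left (hprod ▸ hpos) (by linarith)

theorem alphaSIC_pos (hP : 0 < P) (hγm : 0 < γm) (hγSI : 0 ≤ γSI) (hδ : 0 < δ) (ht : 0 ≤ t) :
    0 < alphaSIC P γm γSI δ t := by
  unfold alphaSIC
  positivity

theorem alphaSIC_strictMono (hP : 0 < P) (hγm : 0 < γm) (hγSI : 0 < γSI) (hδ : 0 < δ) :
    StrictMono (alphaSIC P γm γSI δ) := by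
  intro s t hst
  unfold alphaSIC
  gcongr

theorem alphaMax_lt_one (hP : 0 < P) (hγm : 0 < γm) (hγSI : 0 ≤ γSI) (hδ : 0 < δ) (ht : 0 ≤ t) :
    alphaMax P γm γSI δ t < 1 := by
  unfold alphaMax
  have : 0 < δ * (γSI * t + 1) / (P * γm) := by positivity
  linarith

theorem alphaMax_antitone (hP : 0 < P) (hγm : 0 < γm) (hγSI : 0 ≤ γSI) (hδ : 0 ≤ δ) :
    Antitone (alphaMax P γm γSI δ) := by
  intro s t hst
  unfold alphaMax
  gcongr

theorem weakMargin_eq :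
    weakMargin P γn γd δ α t =
      α * (P * γn * (δ + 1 - t * γd)) - (P * γn + 1) * (δ - t * γd) := by
  unfold weakMargin
  ring

theorem alphaWeak_le_iff (hP : 0 < P) (hγn : 0 < γn) (hw : 0 < δ + 1 - t * γd) :
    alphaWeak P γn γd δ t ≤ α ↔ 0 ≤ weakMargin P γn γd δ α t := by
  rw [alphaWeak, div_le_iff₀ (by positivity), weakMargin_eq, sub_nonneg]

theorem weakMargin_nonneg_of_alphaWeak_le (hP : 0 < P) (hγn : 0 < γn) (hα : α ≤ 1)
    (h : alphaWeak P γn γd δ t ≤ α) : 0 ≤ weakMargin P γn γd δ α t := by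
  rcases lt_or_ge 0 (δ + 1 - t * γd) with hw | hw
  · exact (alphaWeak_le_iff hP hγn hw).1 h
  · rw [weakMargin_eq]
    have hN : 0 < P * γn := mul_pos hP hγn
    nlinarith [mul_le_mul_of_nonneg_left hα hN.le]

theorem nonneg_of_alphaWeak_lt_one (hP : 0 < P) (hγn : 0 < γn) (h : alphaWeak P γn γd δ t < 1) :
    0 ≤ δ + 1 - t * γd := by
  by_contra! hw
  have hN : 0 < P * γn := mul_pos hP hγn
  refine h.not_ge ?_
  rw [alphaWeak, le_div_iff_of_neg (mul_neg_of_pos_of_neg hN hw)]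
  nlinarith

theorem continuous_weakMargin_alphaSIC :
    Continuous fun t => weakMargin P γn γd δ (alphaSIC P γm γSI δ t) t := by
  unfold weakMargin alphaSIC
  fun_prop

theorem fullPowerRate_lt_of_lt {s : ℝ} (hP : 0 < P) (hγm : 0 < γm) (hγSI : 0 < γSI)
    (hs : 0 ≤ s) (hst : s < t) : fullPowerRate P γm γSI t < fullPowerRate P γm γSI s := by
  have hc : 0 < t * γSI + 1 := by nlinarith
  unfold fullPowerRate
  refine logb_lt_logb one_lt_two (by positivity) ?_
  gcongr

theorem fullPowerRate_le_sumRate_alphaSIC (hP : 0 < P) (hγm : 0 < γm) (hγn : 0 < γn)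
    (hγd : 0 ≤ γd) (hγSI : 0 ≤ γSI) (hδ : 0 < δ) (ht : 0 ≤ t) (h1 : alphaSIC P γm γSI δ t < 1)
    (h : 0 ≤ weakMargin P γn γd δ (alphaSIC P γm γSI δ t) t) :
    fullPowerRate P γm γSI t ≤ sumRate P γm γn γd γSI (alphaSIC P γm γSI δ t) t := by
  rw [fullPowerRate_le_sumRate_iff hP hγm hγSI ht h1,
    sicRate_le_weakRate_iff hP hγm hγn hγd hγSI ht (alphaSIC_pos hP hγm hγSI hδ ht).le h1,
    rateGap_alphaSIC hP hγm hδ]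
  exact mul_nonneg (sicDenom_alphaSIC_pos hP hγm hγSI hδ ht).le h

theorem weakMargin_alphaSIC_pos_of_lt (hP : 0 < P) (hγm : 0 < γm) (hγn : 0 < γn) (hγd : 0 < γd)
    (hγSI : 0 ≤ γSI) (hδ : 0 < δ) (ht : 0 < t) (hlt : alphaSIC P γm γSI δ t < α) (hα : α < 1)
    (h : 0 ≤ rateGap P γm γn γd γSI α t) :
    0 < weakMargin P γn γd δ (alphaSIC P γm γSI δ t) t := by
  have hgap := rateGap_pos_of_lt hP hγm hγn hγd hγSI ht
    (alphaSIC_pos hP hγm hγSI hδ ht.le).le hlt hα h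
  rw [rateGap_alphaSIC hP hγm hδ] at hgap
  exact pos_of_mul_pos_right hgap (sicDenom_alphaSIC_pos hP hγm hγSI hδ ht.le).le

theorem exists_lt_sumRate_alphaSIC (hP : 0 < P) (hγm : 0 < γm) (hγn : 0 < γn) (hγd : 0 < γd)
    (hγSI : 0 < γSI) (hδ : 0 < δ) (ht : 0 < t) (hw : 0 ≤ δ + 1 - t * γd)
    (h1 : alphaSIC P γm γSI δ t < 1) (h : 0 < weakMargin P γn γd δ (alphaSIC P γm γSI δ t) t) :
    ∃ t' ∈ Ioo 0 t, alphaWeak P γn γd δ t' ≤ alphaSIC P γm γSI δ t' ∧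
      fullPowerRate P γm γSI t < sumRate P γm γn γd γSI (alphaSIC P γm γSI δ t') t' := by
  obtain ⟨t', ⟨ht'0, ht'⟩, h'⟩ := exists_mem_Ioo_pos_of_continuousAt
    (f := fun t => weakMargin P γn γd δ (alphaSIC P γm γSI δ t) t) ht
    continuous_weakMargin_alphaSIC.continuousAt h
  have hw' : 0 < δ + 1 - t' * γd := by linarith [mul_lt_mul_of_pos_right ht' hγd]
  have h1' : alphaSIC P γm γSI δ t' < 1 := (alphaSIC_strictMono hP hγm hγSI hδ ht').trans h1
  refine ⟨t', ⟨ht'0, ht'⟩, (alphaWeak_le_iff hP hγn hw').2 h'.le, ?_⟩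
  exact (fullPowerRate_lt_of_lt hP hγm hγSI ht'0.le ht').trans_le
    (fullPowerRate_le_sumRate_alphaSIC hP hγm hγn hγd.le hγSI.le hδ ht'0.le h1' h'.le)

end FDCNOMA

end

open FDCNOMA

theorem fd_optimal_alpha_tight_general (P γm γn γd γSI Pbar Rth δ : ℝ)
    (hP : 0 < P) (hγn : 0 < γn) (hmn : γn < γm) (hγd : 0 < γd) (hγSI : 0 < γSI)
    (hR : 0 < Rth) (hδ : δ = 2 ^ Rth - 1) :
    let AF : ℝ → ℝ := fun Pd => δ * (γSI * Pd + γm * P + 1) / (γm * P * (δ + 1))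
    let BF : ℝ → ℝ := fun Pd =>
      (P * γn + 1) * (δ - Pd * γd) / (P * γn * (δ + 1 - Pd * γd))
    let CF : ℝ → ℝ := fun Pd => 1 - δ * (γSI * Pd + 1) / (P * γm)
    -- FD sum rate of the pair
    let g : ℝ → ℝ → ℝ := fun α Pd =>
      Real.logb 2 (1 + (1 - α) * P * γm / (Pd * γSI + 1)) +
        min (Real.logb 2 (1 + α * P * γm / ((1 - α) * P * γm + Pd * γSI + 1)))
            (Real.logb 2 (1 + Pd * γd + α * P * γn / ((1 - α) * P * γn + 1)))
    -- feasible region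
    let S : Set (ℝ × ℝ) := {p : ℝ × ℝ |
      0 ≤ p.2 ∧ p.2 ≤ Pbar ∧ max (AF p.2) (BF p.2) ≤ p.1 ∧ p.1 ≤ CF p.2}
    S.Nonempty →
      ∀ star ∈ S, (∀ p ∈ S, g p.1 p.2 ≤ g star.1 star.2) →
        BF star.2 ≤ AF star.2 →
          star.1 = δ * (γSI * star.2 + γm * P + 1) / (γm * P * (δ + 1)) := by
  intro AF BF CF g S _ star hstar hmax hBA
  obtain ⟨α, Pd⟩ := star
  obtain ⟨hPd0, hPdbar, hmaxle, hαCF⟩ := hstar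
  have hγm : 0 < γm := hγn.trans hmn
  have hδ0 : 0 < δ := hδ ▸ sub_pos.2 (one_lt_rpow one_lt_two hR)
  have hα1 : α < 1 := hαCF.trans_lt (alphaMax_lt_one hP hγm hγSI.le hδ0 hPd0)
  obtain hAFα | hlt := (le_of_max_le_left hmaxle).eq_or_lt
  · exact hAFα.symm
  exfalso
  have hAFpos : 0 < AF Pd := alphaSIC_pos hP hγm hγSI.le hδ0 hPd0
  have hgap : 0 ≤ rateGap P γm γn γd γSI α Pd := by
    rw [← sicRate_le_weakRate_iff hP hγm hγn hγd.le hγSI.le hPd0 (hAFpos.trans hlt).le hα1,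
      ← fullPowerRate_le_sumRate_iff hP hγm hγSI.le hPd0 hα1]
    exact (fullPowerRate_le_sumRate_alphaSIC hP hγm hγn hγd.le hγSI.le hδ0 hPd0 (hlt.trans hα1)
      (weakMargin_nonneg_of_alphaWeak_le hP hγn (hlt.trans hα1).le hBA)).trans
      (hmax (AF Pd, Pd) ⟨hPd0, hPdbar, max_le le_rfl hBA, hlt.le.trans hαCF⟩)
  have hPd : 0 < Pd := pos_of_rateGap_nonneg hP hmn (hAFpos.trans hlt) hPd0 hgap
  obtain ⟨Pd', ⟨hPd'0, hPd'⟩, hBA', hbetter⟩ := exists_lt_sumRate_alphaSIC hP hγm hγn hγd hγSI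
    hδ0 hPd (nonneg_of_alphaWeak_lt_one hP hγn ((le_of_max_le_right hmaxle).trans_lt hα1))
    (hlt.trans hα1) (weakMargin_alphaSIC_pos_of_lt hP hγm hγn hγd hγSI.le hδ0 hPd hlt hα1 hgap)
  have hAFCF : AF Pd' ≤ CF Pd' := ((alphaSIC_strictMono hP hγm hγSI hδ0 hPd').trans hlt).le.trans
    (hαCF.trans (alphaMax_antitone hP hγm hγSI.le hδ0.le hPd'.le))
  have hopt : sumRate P γm γn γd γSI (AF Pd') Pd' ≤ sumRate P γm γn γd γSI α Pd :=
    hmax (AF Pd', Pd') ⟨hPd'0.le, hPd'.le.trans hPdbar, max_le le_rfl hBA', hAFCF⟩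
  exact (hbetter.trans_le hopt).not_ge (sumRate_le_fullPowerRate hP hγm hγSI.le hPd0 hα1)

/-- In FD C-NOMA, at any sum-rate maximizer `(α*, Pd*)` over the feasible region,
provided `A_F(Pd*) ≥ B_F(Pd*)`, the strong user's SIC-rate constraint is tight:
`α* = f(Pd*)` where `f(x) = δ·(γSI·x + γm·P + 1)/(γm·P·(δ+1))`. -/
theorem fd_optimal_alpha_tight (P γm γn γd γSI Pbar Rth δ : ℝ)
    (hP : 0 < P) (hγn : 0 < γn) (hmn : γn < γm) (hγd : 0 < γd) (hγSI : 0 < γSI)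
    (hPbar : 0 ≤ Pbar) (hR : 0 < Rth) (hδ : δ = 2 ^ Rth - 1) :
    let AF : ℝ → ℝ := fun Pd => δ * (γSI * Pd + γm * P + 1) / (γm * P * (δ + 1))
    let BF : ℝ → ℝ := fun Pd =>
      (P * γn + 1) * (δ - Pd * γd) / (P * γn * (δ + 1 - Pd * γd))
    let CF : ℝ → ℝ := fun Pd => 1 - δ * (γSI * Pd + 1) / (P * γm)
    -- FD sum rate of the pair
    let g : ℝ → ℝ → ℝ := fun α Pd =>
      Real.logb 2 (1 + (1 - α) * P * γm / (Pd * γSI + 1)) +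
        min (Real.logb 2 (1 + α * P * γm / ((1 - α) * P * γm + Pd * γSI + 1)))
            (Real.logb 2 (1 + Pd * γd + α * P * γn / ((1 - α) * P * γn + 1)))
    -- feasible region
    let S : Set (ℝ × ℝ) := {p : ℝ × ℝ |
      0 ≤ p.2 ∧ p.2 ≤ Pbar ∧ max (AF p.2) (BF p.2) ≤ p.1 ∧ p.1 ≤ CF p.2}
    S.Nonempty →
      ∀ star ∈ S, (∀ p ∈ S, g p.1 p.2 ≤ g star.1 star.2) →
        BF star.2 ≤ AF star.2 →
          star.1 = δ * (γSI * star.2 + γm * P + 1) / (γm * P * (δ + 1)) :=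
  fd_optimal_alpha_tight_general P γm γn γd γSI Pbar Rth δ hP hγn hmn hγd hγSI hR hδ
end
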